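/- arXiv:1209.1317 — 3 statements merged into one kernel-verified Lean document; each statement's English description precedes it below -/
import Mathlib

section
/- Let D be a metric space with metric d, let D* ⊆ D be the set of maximizers of f : D → ℝ, and suppose for some ℓ, L > 0 and all (x, x*) ∈ D × D*: f(x*) - f(x) ≥ ℓ·d(x,x*) and |g(x*) - g(x)| ≤ L·d(x,x*). Then for any positive φ, ψ with Lψ ≤ ℓφ, and any x* ∈ D*, max_{x ∈ D} (φ f(x) + ψ g(x)) = φ f(x*) + ψ g(x*). -/
theorem stmt4 {D : Type*} [MetricSpace D] (f g : D → ℝ) (ℓ L : ℝ)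
    (hℓ : 0 < ℓ) (hL : 0 < L)
    (Dstar : Set D) (hDstar : Dstar = {x | ∀ y, f y ≤ f x})
    (hf : ∀ x, ∀ xs ∈ Dstar, f xs - f x ≥ ℓ * dist x xs)
    (hg : ∀ x, ∀ xs ∈ Dstar, |g xs - g x| ≤ L * dist x xs)
    (φ ψ : ℝ) (hφ : 0 < φ) (hψ : 0 < ψ) (hψφ : L * ψ ≤ ℓ * φ)
    (hattain : ∃ x₀, ∀ x, φ * f x + ψ * g x ≤ φ * f x₀ + ψ * g x₀)
    (xs : D) (hxs : xs ∈ Dstar) :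
    (⨆ x, (φ * f x + ψ * g x)) = φ * f xs + ψ * g xs := by
  have key : ∀ x, φ * f x + ψ * g x ≤ φ * f xs + ψ * g xs := by
    intro x
    have h1 := hf x xs hxs
    have h2 := hg x xs hxs
    have h3 : g x - g xs ≤ L * dist x xs := by
      have := abs_le.mp h2
      linarith
    have h4 : ψ * (g x - g xs) ≤ ψ * (L * dist x xs) := by
      exact mul_le_mul_of_nonneg_left h3 hψ.le
    have h5 : φ * (f xs - f x) ≥ φ * (ℓ * dist x xs) :=
      mul_le_mul_of_nonneg_left h1 hφ.le
    have h6 : ψ * (L * dist x xs) ≤ φ * (ℓ * dist x xs) := by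
      have hd : 0 ≤ dist x xs := dist_nonneg
      nlinarith
    linarith
  have : Nonempty D := ⟨xs⟩
  apply le_antisymm
  · exact ciSup_le key
  · exact le_ciSup ⟨_, Set.forall_mem_range.mpr key⟩ xs
end

section
/- Fix a ≥ 0 and b ≥ 0. There exists q ≥ 0 such that for all sufficiently large n and all real z with z ≥ -√n/(2b), Q(z - a/√n) - Q(z + (b/√n) z²) ≤ q/√n, where Q is the standard Gaussian complementary cdf. In particular one may take q = max{(3b e^{-1} + a)/√(2π), (a/√(2π))(1 + ab/n), (8b e^{-1} + a)/√(2π)}. -/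
/-!
On `[x, y] = [z - a/√n, z + (b/√n) z²]` the difference `Q(x) - Q(y)` is at most
`(y - x) · max e^{-t²/2} = (a + b z²)/√n · max e^{-t²/2}`, so it suffices that `z² e^{-t²/2}`
stays bounded on the interval. This is clear for `|z| ≤ 2`. For `|z| ≥ 2` every point of the
interval has `|t| ≥ |z|/2`: for `z > 0` because the left shift is at most `1` once `√n ≥ a`,
for `z < 0` because `z ≥ -√n/(2b)` keeps the right end below `z/2`. Then
`z² e^{-t²/2} ≤ z² e^{-z²/8} ≤ 8`.
-/

/-- The standard Gaussian complementary cdf `Q(x) = ∫_x^∞ (1/√(2π)) e^{-t²/2} dt`. -/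
noncomputable def gaussQ (x : ℝ) : ℝ :=
  ∫ t in Set.Ioi x, Real.exp (-t ^ 2 / 2) / Real.sqrt (2 * Real.pi)

open MeasureTheory Set Real Filter

lemma gaussQ_sub_gaussQ_le {x y M : ℝ} (hxy : x ≤ y)
    (hM : ∀ t ∈ Ioc x y, exp (-t ^ 2 / 2) ≤ M) :
    gaussQ x - gaussQ y ≤ (y - x) * M := by
  have hpdf : Integrable fun t : ℝ => exp (-t ^ 2 / 2) / √(2 * π) := by
    simpa [neg_div, div_eq_inv_mul] using
      (integrable_exp_neg_mul_sq (by norm_num : (0 : ℝ) < 1 / 2)).div_const (√(2 * π))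
  have hsplit : gaussQ x - gaussQ y = ∫ t in Ioc x y, exp (-t ^ 2 / 2) / √(2 * π) := by
    rw [gaussQ, gaussQ, ← Ioc_union_Ioi_eq_Ioi hxy,
      setIntegral_union Ioc_disjoint_Ioi_same measurableSet_Ioi hpdf.integrableOn
        hpdf.integrableOn, add_sub_cancel_right]
  have hsqrt : 1 ≤ √(2 * π) := one_le_sqrt.mpr (by linarith [pi_gt_three])
  have hnorm : ∀ t ∈ Ioc x y, ‖exp (-t ^ 2 / 2) / √(2 * π)‖ ≤ M := fun t ht => by
    rw [Real.norm_of_nonneg (by positivity)]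
    exact (div_le_self (exp_pos _).le hsqrt).trans (hM t ht)
  calc gaussQ x - gaussQ y ≤ ‖∫ t in Ioc x y, exp (-t ^ 2 / 2) / √(2 * π)‖ :=
        hsplit ▸ le_norm_self _
    _ ≤ M * volume.real (Ioc x y) := norm_setIntegral_le_of_norm_le_const measure_Ioc_lt_top hnorm
    _ = (y - x) * M := by rw [volume_real_Ioc_of_le hxy, mul_comm]

lemma sq_mul_exp_neg_sq_div_eight_le (z : ℝ) : z ^ 2 * exp (-(z ^ 2 / 8)) ≤ 8 := by
  have h : z ^ 2 / 8 ≤ exp (z ^ 2 / 8) := by linarith [add_one_le_exp (z ^ 2 / 8)]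
  rw [exp_neg, ← div_eq_mul_inv, div_le_iff₀ (exp_pos _)]
  linarith

lemma add_div_mul_sq_le_half {b s z : ℝ} (hs : 0 < s) (hz : -s / (2 * b) ≤ z) (hz0 : z ≤ 0) :
    z + b / s * z ^ 2 ≤ z / 2 := by
  rcases le_or_gt b 0 with hb | hb
  · have : 0 ≤ -s / (2 * b) := div_nonneg_of_nonpos (by linarith) (by linarith)
    have hz : z = 0 := by linarith
    simp [hz]
  · have h : -s ≤ z * (2 * b) := by rwa [div_le_iff₀ (by positivity)] at hz
    have : b * z ^ 2 ≤ -z / 2 * s := by nlinarith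
    have : b / s * z ^ 2 ≤ -z / 2 := by
      rw [div_mul_eq_mul_div, div_le_iff₀ hs]
      exact this
    linarith

lemma sq_le_four_mul_sq_of_mem_Ioc {a b s z t : ℝ} (hs : 0 < s) (has : a ≤ s)
    (hz : -s / (2 * b) ≤ z) (hz2 : 4 ≤ z ^ 2) (ht : t ∈ Ioc (z - a / s) (z + b / s * z ^ 2)) :
    z ^ 2 ≤ 4 * t ^ 2 := by
  rcases le_or_gt z 0 with hz0 | hz0
  · have := add_div_mul_sq_le_half hs hz hz0
    nlinarith [ht.2]
  · have : a / s ≤ 1 := (div_le_one hs).mpr has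
    have : 2 ≤ z := by nlinarith
    nlinarith [ht.1]

lemma gaussQ_shift_sub_gaussQ_le {a b s z : ℝ} (ha : 0 ≤ a) (hb : 0 ≤ b) (hs : 0 < s)
    (has : a ≤ s) (hz : -s / (2 * b) ≤ z) :
    gaussQ (z - a / s) - gaussQ (z + b / s * z ^ 2) ≤ (a + 8 * b) / s := by
  have hxy : z - a / s ≤ z + b / s * z ^ 2 := by
    have : 0 ≤ a / s := by positivity
    have : 0 ≤ b / s * z ^ 2 := by positivity
    linarith
  obtain ⟨M, hM, hgap⟩ : ∃ M, (∀ t ∈ Ioc (z - a / s) (z + b / s * z ^ 2), exp (-t ^ 2 / 2) ≤ M)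
      ∧ (a + b * z ^ 2) * M ≤ a + 8 * b := by
    by_cases hz2 : z ^ 2 ≤ 4
    · refine ⟨1, fun t _ => exp_le_one_iff.mpr (by nlinarith), by nlinarith⟩
    refine ⟨exp (-(z ^ 2 / 8)), fun t ht => exp_le_exp.mpr ?_, ?_⟩
    · linarith [sq_le_four_mul_sq_of_mem_Ioc hs has hz (by linarith) ht]
    · have h1 : exp (-(z ^ 2 / 8)) ≤ 1 := exp_le_one_iff.mpr (by nlinarith)
      nlinarith [sq_mul_exp_neg_sq_div_eight_le z]
  calc gaussQ (z - a / s) - gaussQ (z + b / s * z ^ 2)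
      ≤ (z + b / s * z ^ 2 - (z - a / s)) * M := gaussQ_sub_gaussQ_le hxy hM
    _ = (a + b * z ^ 2) * M / s := by field_simp; ring
    _ ≤ (a + 8 * b) / s := by gcongr

theorem stmt7 (a b : ℝ) (ha : 0 ≤ a) (hb : 0 ≤ b) :
    ∃ q : ℝ, 0 ≤ q ∧ ∃ N : ℕ, ∀ n : ℕ, N ≤ n → ∀ z : ℝ,
      -(Real.sqrt n) / (2 * b) ≤ z →
      gaussQ (z - a / Real.sqrt n) - gaussQ (z + (b / Real.sqrt n) * z ^ 2)
        ≤ q / Real.sqrt n := by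
  obtain ⟨N, hN⟩ := eventually_atTop.mp
    ((tendsto_sqrt_atTop.comp tendsto_natCast_atTop_atTop).eventually_ge_atTop (max a 1))
  refine ⟨a + 8 * b, by positivity, N, fun n hn z hz => ?_⟩
  have hsqrt : max a 1 ≤ √(n : ℝ) := hN n hn
  exact gaussQ_shift_sub_gaussQ_le ha hb (by linarith [le_max_right a 1])
    (le_of_max_le_left hsqrt) hz
end

section
/- For the transmission of a biased BMS with bias p < δ over a BSC(δ) with bit error rate distortion, the symbol-by-symbol scheme whose decoder always outputs the all-zero vector achieves excess-distortion probability P[T > ⌊nd⌋] where T is Binomial(n, p); i.e., D_1(n,ε) = min{d : Σ_{t=0}^{⌊nd⌋} C(n,t) p^t (1-p)^{n-t} ≥ 1-ε}. More generally, for any 0 ≤ p ≤ 1/2 and δ ≤ 1/2, the better of uncoded transmission (if p ≥ δ) and all-zero decoding (if p < δ) achieves D_1(n,ε) = min{d : Σ_{t=0}^{⌊nd⌋} C(n,t) m^t (1-m)^{n-t} ≥ 1-ε} where m = min{p, δ}. -/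
/-!
With uncoded transmission the decoded bit `i` is wrong iff the channel flips it, so the error
pattern is distributed as `Bern(δ)^n` regardless of the source; with the all-zero decoder it is the
source itself, `Bern(p)^n`. In both cases the excess-distortion event is "more than `⌊nd⌋`
errors", whose probability is the binomial tail `P[Bin(n, q) > ⌊nd⌋]`. A monotone coupling of
`Bern(p)^n` below `Bern(q)^n` for `p ≤ q` shows that this tail is increasing in `q ∈ [0, 1]`,
so the better scheme is the one with `q = min p δ`.
-/

open Finset

lemma sum_range_binomial_mul_ite_lt (n k : ℕ) (q : ℝ) :
    ∑ t ∈ range (n + 1), n.choose t * q ^ t * (1 - q) ^ (n - t) * (if k < t then 1 else 0) =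
      1 - ∑ t ∈ range (k + 1), (n.choose t : ℝ) * q ^ t * (1 - q) ^ (n - t) := by
  set a : ℕ → ℝ := fun t => n.choose t * q ^ t * (1 - q) ^ (n - t)
  have htotal : ∑ t ∈ range (n + 1), a t = 1 := by
    have h := add_pow q (1 - q) n
    rw [add_sub_cancel, one_pow] at h
    rw [h]
    exact sum_congr rfl fun t _ => by simp only [a]; ring
  have hhead : ∑ t ∈ range (n + 1), (if t ∈ range (k + 1) then a t else 0) =
      ∑ t ∈ range (k + 1), a t := by
    rw [sum_ite_mem]
    refine sum_subset inter_subset_right fun t htk htn => ?_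
    have hnt : n < t := by simp_all
    simp [a, Nat.choose_eq_zero_of_lt hnt]
  have hsplit : ∑ t ∈ range (n + 1), a t * (if k < t then 1 else 0) =
      ∑ t ∈ range (n + 1), a t - ∑ t ∈ range (n + 1), (if t ∈ range (k + 1) then a t else 0) := by
    rw [← sum_sub_distrib]
    refine sum_congr rfl fun t _ => ?_
    by_cases hkt : k < t
    · simp [hkt, not_le.mpr hkt]
    · simp [hkt, Nat.lt_succ_of_le (not_lt.mp hkt)]
  linarith

section BernoulliProduct

variable {ι : Type*} [Fintype ι]

def numTrue (s : ι → Bool) : ℕ := #{i | s i}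

def bernoulliWeight (q : ℝ) (s : ι → Bool) : ℝ := ∏ i, if s i then q else 1 - q

lemma numTrue_mono : Monotone (numTrue : (ι → Bool) → ℕ) := fun _ _ hst =>
  card_le_card <| monotone_filter_right _ fun i _ hi => Bool.le_iff_imp.mp (hst i) hi

lemma bernoulliWeight_eq_pow (q : ℝ) (s : ι → Bool) :
    bernoulliWeight q s = q ^ numTrue s * (1 - q) ^ (Fintype.card ι - numTrue s) := by
  have hcompl : #{i | ¬ s i} = Fintype.card ι - numTrue s := by
    have := card_filter_add_card_filter_not (s := univ) (fun i => s i = true)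
    rw [card_univ] at this
    rw [numTrue]
    omega
  rw [bernoulliWeight, prod_ite, prod_const, prod_const, hcompl, numTrue]

variable [DecidableEq ι]

lemma sum_bernoulliWeight (q : ℝ) : ∑ s : ι → Bool, bernoulliWeight q s = 1 := by
  simp only [bernoulliWeight]
  rw [← Fintype.prod_sum (fun _ (b : Bool) => if b then q else 1 - q)]
  simp

lemma sum_bernoulliWeight_mul_comp_numTrue (q : ℝ) (g : ℕ → ℝ) :
    ∑ s : ι → Bool, bernoulliWeight q s * g (numTrue s) =
      ∑ t ∈ range (Fintype.card ι + 1),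
        (Fintype.card ι).choose t * q ^ t * (1 - q) ^ (Fintype.card ι - t) * g t := by
  have hbij : Function.Bijective fun s : ι → Bool => ({i | s i} : Finset ι) :=
    Function.bijective_iff_has_inverse.mpr
      ⟨fun A i => decide (i ∈ A), fun s => by ext; simp, fun A => by ext; simp⟩
  simp_rw [bernoulliWeight_eq_pow, numTrue]
  rw [Fintype.sum_bijective _ hbij _ (fun A => q ^ #A * (1 - q) ^ (Fintype.card ι - #A) * g #A)
    fun _ => rfl, ← powerset_univ,
    sum_powerset_apply_card fun t => q ^ t * (1 - q) ^ (Fintype.card ι - t) * g t, card_univ]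
  simp only [nsmul_eq_mul, mul_assoc]

/-- Coupling: `φ` is a joint law on `Bool × Bool` with marginals `Bern(p)` and `Bern(q)`
(`P(1,1) = p`, `P(0,1) = q - p`, `P(0,0) = 1 - q`) supported on `a ≤ b`. -/
lemma sum_bernoulliWeight_mul_le_of_le {p q : ℝ} (hp : 0 ≤ p) (hpq : p ≤ q) (hq : q ≤ 1)
    {f : (ι → Bool) → ℝ} (hf : Monotone f) :
    ∑ s, bernoulliWeight p s * f s ≤ ∑ s, bernoulliWeight q s * f s := by
  let φ : Bool → Bool → ℝ := fun a b => if a then (if b then p else 0) else (if b then q - p else 1 - q)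
  have hφ_nonneg : ∀ a b, 0 ≤ φ a b := by
    intro a b; cases a <;> cases b <;> simp [φ] <;> linarith
  have hleft : ∀ a, bernoulliWeight p a = ∑ b : ι → Bool, ∏ i, φ (a i) (b i) := fun a => by
    rw [bernoulliWeight, ← Fintype.prod_sum]
    refine prod_congr rfl fun i _ => ?_
    cases a i <;> simp [φ]
  have hright : ∀ b, bernoulliWeight q b = ∑ a : ι → Bool, ∏ i, φ (a i) (b i) := fun b => by
    rw [bernoulliWeight, ← Fintype.prod_sum (fun i (x : Bool) => φ x (b i))]
    refine prod_congr rfl fun i _ => ?_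
    cases b i <;> simp [φ]
  have hsupport : ∀ a b : ι → Bool, (∏ i, φ (a i) (b i)) * f a ≤ (∏ i, φ (a i) (b i)) * f b := by
    intro a b
    by_cases hab : a ≤ b
    · exact mul_le_mul_of_nonneg_left (hf hab) (prod_nonneg fun i _ => hφ_nonneg _ _)
    · obtain ⟨i, hi⟩ : ∃ i, ¬ a i ≤ b i := by simpa [Pi.le_def] using hab
      obtain ⟨hai, hbi⟩ : a i = true ∧ b i = false := by revert hi; cases a i <;> cases b i <;> simp
      rw [prod_eq_zero (mem_univ i) (by simp [φ, hai, hbi]), zero_mul, zero_mul]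
  calc ∑ a, bernoulliWeight p a * f a
      = ∑ a, ∑ b, (∏ i, φ (a i) (b i)) * f a := by simp only [hleft, sum_mul]
    _ ≤ ∑ a, ∑ b, (∏ i, φ (a i) (b i)) * f b :=
        sum_le_sum fun a _ => sum_le_sum fun b _ => hsupport a b
    _ = ∑ b, bernoulliWeight q b * f b := by rw [sum_comm]; simp only [hright, sum_mul]

variable (ι) in
def exceedProb (q : ℝ) (k : ℕ) : ℝ :=
  ∑ s : ι → Bool, bernoulliWeight q s * if k < numTrue s then 1 else 0

lemma exceedProb_eq (q : ℝ) (k : ℕ) :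
    exceedProb ι q k = 1 - ∑ t ∈ range (k + 1),
      ((Fintype.card ι).choose t : ℝ) * q ^ t * (1 - q) ^ (Fintype.card ι - t) := by
  rw [exceedProb, sum_bernoulliWeight_mul_comp_numTrue q fun t => if k < t then 1 else 0,
    sum_range_binomial_mul_ite_lt]

lemma exceedProb_mono {p q : ℝ} (hp : 0 ≤ p) (hpq : p ≤ q) (hq : q ≤ 1) (k : ℕ) :
    exceedProb ι p k ≤ exceedProb ι q k := by
  refine sum_bernoulliWeight_mul_le_of_le hp hpq hq fun s s' hss' => ?_
  have := numTrue_mono hss'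
  split_ifs <;> first | omega | norm_num

lemma min_exceedProb {p q : ℝ} (hp0 : 0 ≤ p) (hp1 : p ≤ 1) (hq0 : 0 ≤ q) (hq1 : q ≤ 1) (k : ℕ) :
    min (exceedProb ι p k) (exceedProb ι q k) = exceedProb ι (min p q) k := by
  rcases le_total p q with h | h
  · rw [min_eq_left h, min_eq_left (exceedProb_mono hp0 h hq1 k)]
  · rw [min_eq_right h, min_eq_right (exceedProb_mono hq0 h hp1 k)]

end BernoulliProduct

lemma lt_div_natCast_iff_floor_lt {n t : ℕ} (hn : 0 < n) {d : ℝ} (hd : 0 ≤ d) :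
    d < t / n ↔ ⌊(n : ℝ) * d⌋₊ < t := by
  rw [lt_div_iff₀ (by exact_mod_cast hn), Nat.floor_lt (by positivity), mul_comm]

/-- Transmission of a Bernoulli(p) source over a BSC(δ) under bit-error-rate
distortion: the better of uncoded transmission and all-zero decoding achieves
excess-distortion probability `P[T > ⌊nd⌋]` with `T ~ Binomial(n, min{p, δ})`. -/
theorem stmt17 (n : ℕ) (hn : 0 < n) (p δ d : ℝ)
    (hp0 : 0 ≤ p) (hp1 : p ≤ 1 / 2) (hδ0 : 0 ≤ δ) (hδ1 : δ ≤ 1 / 2) (hd : 0 ≤ d) :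
    min
      -- uncoded transmission
      (∑ s : Fin n → Bool, ∑ e : Fin n → Bool,
        ((∏ i, (if s i then p else 1 - p)) * ∏ i, (if e i then δ else 1 - δ)) *
          (if d < ((Finset.univ.filter
              (fun i => s i ≠ Bool.xor (s i) (e i))).card : ℝ) / n
           then (1 : ℝ) else 0))
      -- decoder always outputs the all-zero vector
      (∑ s : Fin n → Bool,
        (∏ i, (if s i then p else 1 - p)) *
          (if d < ((Finset.univ.filter (fun i => s i ≠ false)).card : ℝ) / n
           then (1 : ℝ) else 0))
      = 1 - ∑ t ∈ Finset.range (⌊(n : ℝ) * d⌋₊ + 1),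
          (n.choose t : ℝ) * (min p δ) ^ t * (1 - min p δ) ^ (n - t) := by
  set k := ⌊(n : ℝ) * d⌋₊
  have hthreshold : ∀ t : ℕ, (if d < (t : ℝ) / n then (1 : ℝ) else 0) = if k < t then 1 else 0 :=
    fun t => if_congr (lt_div_natCast_iff_floor_lt hn hd) rfl rfl
  have herrors : ∀ s e : Fin n → Bool,
      (univ.filter fun i => s i ≠ Bool.xor (s i) (e i)) = ({i | e i} : Finset (Fin n)) :=
    fun s e => by
      ext i; simp only [mem_filter, mem_univ, true_and]; cases s i <;> cases e i <;> decide
  trans min (exceedProb (Fin n) δ k) (exceedProb (Fin n) p k)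
  · congr 1
    · calc _ = (∑ s : Fin n → Bool, bernoulliWeight p s) * exceedProb (Fin n) δ k := by
            simp_rw [herrors, hthreshold, mul_assoc, ← mul_sum, ← sum_mul]; rfl
        _ = exceedProb (Fin n) δ k := by rw [sum_bernoulliWeight, one_mul]
    · simp_rw [Bool.ne_false_iff, hthreshold]
      rfl
  · rw [min_exceedProb hδ0 (by linarith) hp0 (by linarith), min_comm δ p, exceedProb_eq,
      Fintype.card_fin]
end
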